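/- arXiv:2602.17379 — 2 statements merged into one kernel-verified Lean document; each statement's English description precedes it below -/
import Mathlib

section
/- Let I ⊆ ℝ^{l×p} be an interval matrix, M ⊆ ℝ^{p×q} a matrix zonotope, and j ∈ ℕ. Then I^j M = {N₁⋯N_j P | N₁,…,N_j ∈ I, P ∈ M} ⊆ T_I^j(M), where T_I^j denotes the j-fold composition of the operator T_I. -/
/-- Interval matrix C ⊕ [−Δ, Δ]. -/
def intv {p q : ℕ} (C Δ : Matrix (Fin p) (Fin q) ℝ) : Set (Matrix (Fin p) (Fin q) ℝ) :=
  {M | ∀ i j, |M i j - C i j| ≤ Δ i j}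

/-- Entrywise absolute value of a matrix. -/
def aent {p q : ℕ} (M : Matrix (Fin p) (Fin q) ℝ) : Matrix (Fin p) (Fin q) ℝ :=
  Matrix.of fun i j => |M i j|

/-- Matrix zonotope with a list of generators. -/
def zonoL {p q : ℕ} (C : Matrix (Fin p) (Fin q) ℝ)
    (G : List (Matrix (Fin p) (Fin q) ℝ)) : Set (Matrix (Fin p) (Fin q) ℝ) :=
  {M | ∃ β : Fin G.length → ℝ, (∀ i, |β i| ≤ 1) ∧ M = C + ∑ i, β i • G.get i}

/-- Entrywise decomposition: `edec M k` keeps the entry of `M` at position `k`. -/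
def edec {l q : ℕ} (M : Matrix (Fin l) (Fin q) ℝ) (k : Fin l × Fin q) :
    Matrix (Fin l) (Fin q) ℝ :=
  Matrix.of fun i j => if (i, j) = k then M i j else 0

/-- The entrywise decomposition E(M), as a list of matrices. -/
noncomputable def edecL {l q : ℕ} (M : Matrix (Fin l) (Fin q) ℝ) : List (Matrix (Fin l) (Fin q) ℝ) :=
  (Finset.univ : Finset (Fin l × Fin q)).toList.map (edec M)

/-- The operator T_I on (center, generator-list) representations of matrix zonotopes:
T_I(⟨M_C; G⟩) = ⟨C M_C; C G₁,…,C G_g, E(F)⟩ with F = Δ(|M_C| + Σⱼ|Gⱼ|),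
for the interval matrix I = C ⊕ [−Δ, Δ]. -/
noncomputable def Tmap {n q : ℕ} (C Δ : Matrix (Fin n) (Fin n) ℝ)
    (Z : Matrix (Fin n) (Fin q) ℝ × List (Matrix (Fin n) (Fin q) ℝ)) :
    Matrix (Fin n) (Fin q) ℝ × List (Matrix (Fin n) (Fin q) ℝ) :=
  (C * Z.1, Z.2.map (fun X => C * X) ++ edecL (Δ * (aent Z.1 + (Z.2.map aent).sum)))

/-- I^j M = {N₁⋯N_j P | Nᵢ ∈ I, P ∈ M}. -/
def powProd {n q : ℕ} (I : Set (Matrix (Fin n) (Fin n) ℝ)) (j : ℕ)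
    (Mset : Set (Matrix (Fin n) (Fin q) ℝ)) : Set (Matrix (Fin n) (Fin q) ℝ) :=
  {x | ∃ Ns : Fin j → Matrix (Fin n) (Fin n) ℝ, (∀ i, Ns i ∈ I) ∧
    ∃ P ∈ Mset, x = (List.ofFn Ns).prod * P}

/-! For `N ∈ C ⊕ [−Δ, Δ]` and `P` in the zonotope `⟨M_C; G⟩`, write `N P = C P + (N − C) P`.
The first term lies in `⟨C M_C; C G⟩`. The second is entrywise bounded by
`|N − C| |P| ≤ Δ (|M_C| + Σⱼ |Gⱼ|) = F`, so it lies in `⟨0; E(F)⟩`, the zonotope spanned by the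
entries of `F`. Adding the two zonotopes gives `I M ⊆ T_I(M)`, and induction on `j` gives the
statement. -/

section ZonotopeAlgebra

variable {p q : ℕ}

theorem add_mem_zonoL_append {c d x y : Matrix (Fin p) (Fin q) ℝ}
    {A B : List (Matrix (Fin p) (Fin q) ℝ)} (hx : x ∈ zonoL c A) (hy : y ∈ zonoL d B) :
    x + y ∈ zonoL (c + d) (A ++ B) := by
  obtain ⟨α, hα, rfl⟩ := hx
  obtain ⟨β, hβ, rfl⟩ := hy
  have hlen : (A ++ B).length = A.length + B.length := List.length_append
  have hαβ : ∀ k, |Fin.append α β k| ≤ 1 :=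
    Fin.addCases (by simpa using hα) (by simpa using hβ)
  refine ⟨fun i => Fin.append α β (i.cast hlen), fun i => hαβ _, ?_⟩
  rw [Fintype.sum_equiv (finCongr hlen) (fun i => Fin.append α β (i.cast hlen) • (A ++ B).get i)
      (fun k => Fin.append α β k • (A ++ B).get (k.cast hlen.symm)) (fun _ => rfl),
    Fin.sum_univ_add]
  simp only [List.get_eq_getElem, Fin.append_left, Fin.val_cast, Fin.val_castAdd, Fin.is_lt,
    List.getElem_append_left, Fin.append_right, Fin.val_natAdd, le_add_iff_nonneg_right, zero_le,
    List.getElem_append_right, add_tsub_cancel_left]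
  abel

theorem mul_mem_zonoL_map {n : ℕ} (M : Matrix (Fin n) (Fin p) ℝ) {c x : Matrix (Fin p) (Fin q) ℝ}
    {G : List (Matrix (Fin p) (Fin q) ℝ)} (hx : x ∈ zonoL c G) :
    M * x ∈ zonoL (M * c) (G.map (M * ·)) := by
  obtain ⟨β, hβ, rfl⟩ := hx
  have hlen : (G.map (M * ·)).length = G.length := List.length_map _
  refine ⟨fun i => β (i.cast hlen), fun i => hβ _, ?_⟩
  rw [Fintype.sum_equiv (finCongr hlen) (fun i => β (i.cast hlen) • (G.map (M * ·)).get i)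
      (fun k => β k • (M * G.get k)) (fun _ => by simp), Matrix.mul_add, Matrix.mul_sum]
  simp only [Matrix.mul_smul]

theorem abs_apply_le_of_mem_zonoL {c x : Matrix (Fin p) (Fin q) ℝ}
    {G : List (Matrix (Fin p) (Fin q) ℝ)} (hx : x ∈ zonoL c G) (i : Fin p) (j : Fin q) :
    |x i j| ≤ (aent c + (G.map aent).sum) i j := by
  obtain ⟨β, hβ, rfl⟩ := hx
  have hgen : |(∑ k, β k • G.get k) i j| ≤ (G.map aent).sum i j := by
    rw [← Fin.sum_univ_fun_getElem, Matrix.sum_apply, Matrix.sum_apply]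
    refine (Finset.abs_sum_le_sum_abs _ _).trans (Finset.sum_le_sum fun k _ => ?_)
    simpa [aent, abs_mul] using mul_le_of_le_one_left (abs_nonneg (G[k] i j)) (hβ k)
  exact (abs_add_le _ _).trans (add_le_add le_rfl hgen)

theorem add_smul_sum_mem_zonoL_toList {ι : Type*} [Fintype ι] (c : Matrix (Fin p) (Fin q) ℝ)
    (g : ι → Matrix (Fin p) (Fin q) ℝ) {β : ι → ℝ} (hβ : ∀ i, |β i| ≤ 1) :
    c + ∑ i, β i • g i ∈ zonoL c ((Finset.univ : Finset ι).toList.map g) := by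
  set L := (Finset.univ : Finset ι).toList
  have hlen : (L.map g).length = L.length := List.length_map _
  refine ⟨fun k => β L[k.val], fun k => hβ _, ?_⟩
  rw [Fintype.sum_equiv (finCongr hlen) (fun k => β L[k.val] • (L.map g).get k)
      (fun k => β L[k.val] • g L[k.val]) (fun _ => by simp),
    Fin.sum_univ_fun_getElem L (fun i => β i • g i), Finset.sum_map_toList]

theorem sum_smul_edec (F : Matrix (Fin p) (Fin q) ℝ) (a : Fin p × Fin q → ℝ) :
    ∑ k, a k • edec F k = Matrix.of fun i j => a (i, j) * F i j := by
  ext i j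
  simp [Matrix.sum_apply, edec, mul_ite]

theorem mem_zonoL_zero_edecL {E F : Matrix (Fin p) (Fin q) ℝ}
    (hE : ∀ i j, |E i j| ≤ F i j) : E ∈ zonoL 0 (edecL F) := by
  have hcoef : ∀ k : Fin p × Fin q, |E k.1 k.2 / F k.1 k.2| ≤ 1 := fun ⟨i, j⟩ => by
    rw [abs_div]
    exact div_le_one_of_le₀ ((hE i j).trans (le_abs_self _)) (abs_nonneg _)
  have hdecomp : E = ∑ k, (E k.1 k.2 / F k.1 k.2) • edec F k := by
    rw [sum_smul_edec]
    ext i j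
    -- `x / 0 = 0` is harmless: `F i j = 0` forces `E i j = 0`.
    rcases eq_or_ne (F i j) 0 with hF | hF
    · simpa [hF] using hE i j
    · simp [div_mul_cancel₀ _ hF]
  have hmem := add_smul_sum_mem_zonoL_toList 0 (edec F) hcoef
  rwa [zero_add, ← hdecomp] at hmem

end ZonotopeAlgebra

theorem abs_mul_apply_le {l m n : Type*} [Fintype m] {A Δ : Matrix l m ℝ} {B K : Matrix m n ℝ}
    (hA : ∀ i k, |A i k| ≤ Δ i k) (hB : ∀ k j, |B k j| ≤ K k j) (i : l) (j : n) :
    |(A * B) i j| ≤ (Δ * K) i j := by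
  simp only [Matrix.mul_apply]
  refine (Finset.abs_sum_le_sum_abs _ _).trans (Finset.sum_le_sum fun k _ => ?_)
  rw [abs_mul]
  exact mul_le_mul (hA i k) (hB k j) (abs_nonneg _) ((abs_nonneg _).trans (hA i k))

theorem mul_mem_Tmap {n q : ℕ} {C Δ N : Matrix (Fin n) (Fin n) ℝ} (hN : N ∈ intv C Δ)
    {Z : Matrix (Fin n) (Fin q) ℝ × List (Matrix (Fin n) (Fin q) ℝ)} {P : Matrix (Fin n) (Fin q) ℝ}
    (hP : P ∈ zonoL Z.1 Z.2) : N * P ∈ zonoL (Tmap C Δ Z).1 (Tmap C Δ Z).2 := by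
  have hdev : (N - C) * P ∈ zonoL 0 (edecL (Δ * (aent Z.1 + (Z.2.map aent).sum))) :=
    mem_zonoL_zero_edecL (abs_mul_apply_le hN (abs_apply_le_of_mem_zonoL hP))
  have hsplit : N * P = C * P + (N - C) * P := by rw [Matrix.sub_mul, add_sub_cancel]
  simpa [hsplit, Tmap] using add_mem_zonoL_append (mul_mem_zonoL_map C hP) hdev

theorem powProd_zero {n q : ℕ} (I : Set (Matrix (Fin n) (Fin n) ℝ))
    (M : Set (Matrix (Fin n) (Fin q) ℝ)) : powProd I 0 M = M := by
  ext x
  simp [powProd]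

theorem exists_mul_of_mem_powProd_succ {n q : ℕ} {I : Set (Matrix (Fin n) (Fin n) ℝ)} {j : ℕ}
    {M : Set (Matrix (Fin n) (Fin q) ℝ)} {x : Matrix (Fin n) (Fin q) ℝ}
    (hx : x ∈ powProd I (j + 1) M) : ∃ N ∈ I, ∃ y ∈ powProd I j M, x = N * y := by
  obtain ⟨Ns, hNs, P, hP, rfl⟩ := hx
  refine ⟨Ns 0, hNs 0, _, ⟨fun i => Ns i.succ, fun i => hNs _, P, hP, rfl⟩, ?_⟩
  rw [List.ofFn_succ, List.prod_cons, Matrix.mul_assoc]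

theorem stmt10_general {n q : ℕ} (C Δ : Matrix (Fin n) (Fin n) ℝ)
    (Mc : Matrix (Fin n) (Fin q) ℝ) (G : List (Matrix (Fin n) (Fin q) ℝ)) (j : ℕ) :
    powProd (intv C Δ) j (zonoL Mc G) ⊆
      zonoL ((Tmap C Δ)^[j] (Mc, G)).1 ((Tmap C Δ)^[j] (Mc, G)).2 := by
  induction j with
  | zero => simp [powProd_zero]
  | succ j ih =>
    intro x hx
    obtain ⟨N, hN, y, hy, rfl⟩ := exists_mul_of_mem_powProd_succ hx
    rw [Function.iterate_succ_apply']
    exact mul_mem_Tmap hN (ih hy)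

/-- I^j M ⊆ T_I^j(M). -/
theorem stmt10 {n q : ℕ} (C Δ : Matrix (Fin n) (Fin n) ℝ) (hΔ : ∀ i j, 0 ≤ Δ i j)
    (Mc : Matrix (Fin n) (Fin q) ℝ) (G : List (Matrix (Fin n) (Fin q) ℝ)) (j : ℕ) :
    powProd (intv C Δ) j (zonoL Mc G) ⊆
      zonoL ((Tmap C Δ)^[j] (Mc, G)).1 ((Tmap C Δ)^[j] (Mc, G)).2 :=
  stmt10_general C Δ Mc G j
end

section
/- Let Ĥ be a square real matrix and Δ_K ≥ 0. With F₀ = Δ_S ≥ 0 and F_{j+1} = Δ_K Σ_{i=0}^{j} |Ĥ^{j−i}| Fᵢ, the following expansion identity holds: for each j ≥ 1, F_j equals Δ_K Σ_{j−1} Δ_S, where Σ_{j−1} is the sum over all words w = |M₁^{q₁}||M₂^{q₂}|⋯|M_h^{q_h}| with letters alternating between Ĥ and Δ_K (M_i ∈ {Ĥ, Δ_K}, M_i ≠ M_{i+1}), exponents qᵢ ≥ 1 summing to j−1, with the convention Σ₀ = I. -/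
/-- The value of a word w = ((M₁,q₁),…,(M_h,q_h)): the product
|M₁^{q₁}||M₂^{q₂}|⋯|M_h^{q_h}|, where the letter `true` stands for Ĥ and
`false` for Δ_K.  The empty word has value I. -/
noncomputable def wordVal {n : ℕ} (Hhat ΔK : Matrix (Fin n) (Fin n) ℝ)
    (w : List (Bool × ℕ)) : Matrix (Fin n) (Fin n) ℝ :=
  (w.map fun a => aent ((if a.1 then Hhat else ΔK) ^ a.2)).prod

/-!
For `Δ_K ≥ 0` we have `|Δ_K^q| = Δ_K^q`, so multiplying an alternating word on the left by `Δ_K`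
either merges into its leading `Δ_K`-block or starts a new one. Hence every alternating word of
weight `j` other than `|Ĥ^j|` factors uniquely as `|Ĥ^a| Δ_K v` with `v` alternating of weight
`k = j - 1 - a`, and the word sums satisfy `Σ_j = |Ĥ^j| + ∑_{k<j} |Ĥ^{j-1-k}| Δ_K Σ_k`. This is
exactly the recursion that `F_{j+1} = Δ_K Σ_j Δ_S` inherits from the defining recursion of `F`.
-/

theorem aent_of_nonneg {p q : ℕ} {M : Matrix (Fin p) (Fin q) ℝ} (h : ∀ i j, 0 ≤ M i j) :
    aent M = M := by
  ext i j
  exact abs_of_nonneg (h i j)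

theorem aent_one {p : ℕ} : aent (1 : Matrix (Fin p) (Fin p) ℝ) = 1 :=
  aent_of_nonneg fun i j => by by_cases h : i = j <;> simp [Matrix.one_apply, h]

theorem wordVal_nil {n : ℕ} (H K : Matrix (Fin n) (Fin n) ℝ) : wordVal H K [] = 1 := rfl

theorem wordVal_cons {n : ℕ} (H K : Matrix (Fin n) (Fin n) ℝ) (a : Bool × ℕ)
    (w : List (Bool × ℕ)) :
    wordVal H K (a :: w) = aent ((if a.1 then H else K) ^ a.2) * wordVal H K w :=
  List.prod_cons

namespace AlternatingWord

def ofWeight (j : ℕ) : Set (List (Bool × ℕ)) :=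
  {w | (∀ a ∈ w, 1 ≤ a.2) ∧ w.IsChain (fun a b => a.1 ≠ b.1) ∧ (w.map Prod.snd).sum = j}

theorem finite_ofWeight (j : ℕ) : (ofWeight j).Finite := by
  let S : Set (Bool × ℕ) := Set.univ ×ˢ Set.Iic j
  have : Finite S := (Set.finite_univ.prod (Set.finite_Iic j)).to_subtype
  refine ((List.finite_length_le S j).image (List.map Subtype.val)).subset ?_
  rintro w ⟨hpos, -, hw⟩
  have hle : ∀ a ∈ w, a ∈ S := fun a ha =>
    ⟨trivial, hw ▸ List.le_sum_of_mem (List.mem_map_of_mem (f := Prod.snd) ha)⟩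
  have hlen : w.length ≤ j := by
    rw [← hw]
    simpa using List.length_le_sum_of_one_le (w.map Prod.snd)
      (by simpa only [List.mem_map, forall_exists_index, and_imp, forall_apply_eq_imp_iff₂])
  lift w to List S using hle
  exact ⟨w, by simpa using hlen, rfl⟩

theorem cons_mem_ofWeight_iff {b : Bool} {q k : ℕ} {w : List (Bool × ℕ)} :
    (b, q) :: w ∈ ofWeight (q + k) ↔ 1 ≤ q ∧ (∀ c ∈ w.head?, b ≠ c.1) ∧ w ∈ ofWeight k := by
  simp only [ofWeight, Set.mem_ofPred_eq, List.mem_cons, forall_eq_or_imp, List.isChain_cons,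
    List.map_cons, List.sum_cons, Nat.add_left_cancel_iff]
  tauto

theorem exists_eq_add_of_cons_mem_ofWeight {b : Bool} {q j : ℕ} {w : List (Bool × ℕ)}
    (hw : (b, q) :: w ∈ ofWeight j) : ∃ k, j = q + k :=
  ⟨(w.map Prod.snd).sum, by simp [← hw.2.2]⟩

theorem ofWeight_zero : ofWeight 0 = {[]} := by
  ext (_ | ⟨a, w⟩)
  · simp [ofWeight, List.IsChain.nil]
  · simp only [ofWeight, Set.mem_ofPred_eq, List.mem_cons, forall_eq_or_imp, List.map_cons,
      List.sum_cons, Set.mem_singleton_iff, reduceCtorEq, iff_false]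
    omega

def prependK : List (Bool × ℕ) → List (Bool × ℕ)
  | (false, q) :: w => (false, q + 1) :: w
  | w => (false, 1) :: w

def prependH (a : ℕ) (w : List (Bool × ℕ)) : List (Bool × ℕ) :=
  if a = 0 then w else (true, a) :: w

theorem exists_prependK_eq_cons (w : List (Bool × ℕ)) : ∃ q v, prependK w = (false, q) :: v := by
  rcases w with _ | ⟨⟨_ | _, q⟩, v⟩ <;> exact ⟨_, _, rfl⟩

theorem prependK_mem_ofWeight {w : List (Bool × ℕ)} {k : ℕ} (hw : w ∈ ofWeight k) :
    prependK w ∈ ofWeight (k + 1) := by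
  rcases w with _ | ⟨⟨_ | _, q⟩, v⟩
  · obtain rfl : k = 0 := by simpa [ofWeight] using hw.2.2.symm
    exact cons_mem_ofWeight_iff.2 ⟨le_rfl, by simp, hw⟩
  · obtain ⟨k, rfl⟩ := exists_eq_add_of_cons_mem_ofWeight hw
    obtain ⟨hq, hhead, hv⟩ := cons_mem_ofWeight_iff.1 hw
    rw [show q + k + 1 = (q + 1) + k by omega]
    exact cons_mem_ofWeight_iff.2 ⟨by omega, hhead, hv⟩
  · rw [add_comm]
    exact cons_mem_ofWeight_iff.2 ⟨le_rfl, by simp, hw⟩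

theorem exists_eq_prependK {c k : ℕ} {t : List (Bool × ℕ)}
    (hw : (false, c) :: t ∈ ofWeight (k + 1)) : ∃ v ∈ ofWeight k, (false, c) :: t = prependK v := by
  obtain ⟨k', hk⟩ := exists_eq_add_of_cons_mem_ofWeight hw
  rw [hk] at hw
  obtain ⟨hc, hhead, ht⟩ := cons_mem_ofWeight_iff.1 hw
  match c, hc with
  | 1, _ =>
    refine ⟨t, by rwa [show k = k' by omega], ?_⟩
    rcases t with _ | ⟨⟨_ | _, q⟩, t⟩
    · rfl
    · simp at hhead
    · rfl
  | c + 2, _ =>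
    refine ⟨(false, c + 1) :: t, ?_, rfl⟩
    rw [show k = c + 1 + k' by omega]
    exact cons_mem_ofWeight_iff.2 ⟨by omega, hhead, ht⟩

theorem exists_eq_prependH_prependK {j : ℕ} {w : List (Bool × ℕ)} (hw : w ∈ ofWeight (j + 1))
    (hH : w ≠ [(true, j + 1)]) :
    ∃ a k, a + k = j ∧ ∃ v ∈ ofWeight k, w = prependH a (prependK v) := by
  rcases w with _ | ⟨⟨_ | _, e⟩, t⟩
  · simp [ofWeight] at hw
  · exact ⟨0, j, zero_add j, exists_eq_prependK hw⟩
  · obtain ⟨k, hk⟩ := exists_eq_add_of_cons_mem_ofWeight hw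
    rw [hk] at hw
    obtain ⟨he, hhead, ht⟩ := cons_mem_ofWeight_iff.1 hw
    rcases t with _ | ⟨⟨_ | _, c⟩, t⟩
    · simp_all [ofWeight]
    · obtain ⟨k', rfl⟩ := exists_eq_add_of_cons_mem_ofWeight ht
      have hc := (cons_mem_ofWeight_iff.1 ht).1
      obtain ⟨v, hv, hwv⟩ := exists_eq_prependK (k := c - 1 + k')
        (by rwa [show c - 1 + k' + 1 = c + k' by omega])
      refine ⟨e, c - 1 + k', by omega, v, hv, ?_⟩
      rw [prependH, if_neg (by omega), hwv]
    · simp at hhead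

theorem prependK_inj {v v' : List (Bool × ℕ)} (hv : ∀ a ∈ v, 1 ≤ a.2) (hv' : ∀ a ∈ v', 1 ≤ a.2) :
    prependK v = prependK v' ↔ v = v' := by
  refine ⟨fun h => ?_, congrArg _⟩
  rcases v with _ | ⟨⟨_ | _, q⟩, v⟩ <;> rcases v' with _ | ⟨⟨_ | _, q'⟩, v'⟩ <;>
    simp_all [prependK]

theorem prependH_prependK_inj {a a' : ℕ} {v v' : List (Bool × ℕ)} (hv : ∀ a ∈ v, 1 ≤ a.2)
    (hv' : ∀ a ∈ v', 1 ≤ a.2) :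
    prependH a (prependK v) = prependH a' (prependK v') ↔ a = a' ∧ v = v' := by
  rw [← prependK_inj hv hv']
  obtain ⟨q, u, hu⟩ := exists_prependK_eq_cons v
  obtain ⟨q', u', hu'⟩ := exists_prependK_eq_cons v'
  rw [hu, hu']
  by_cases ha : a = 0 <;> by_cases ha' : a' = 0 <;> simp [prependH, ha, ha']
  omega

theorem prependH_prependK_mem_ofWeight (a : ℕ) {v : List (Bool × ℕ)} {k : ℕ}
    (hv : v ∈ ofWeight k) : prependH a (prependK v) ∈ ofWeight (a + (k + 1)) := by
  have hKv := prependK_mem_ofWeight hv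
  by_cases ha : a = 0
  · simpa [prependH, ha] using hKv
  · obtain ⟨q, u, hu⟩ := exists_prependK_eq_cons v
    rw [prependH, if_neg ha]
    exact cons_mem_ofWeight_iff.2 ⟨by omega, by simp [hu], hKv⟩

theorem prependH_prependK_ne_singleton (a j : ℕ) (v : List (Bool × ℕ)) :
    prependH a (prependK v) ≠ [(true, j)] := by
  obtain ⟨q, u, hu⟩ := exists_prependK_eq_cons v
  unfold prependH
  split_ifs <;> simp [hu]

variable {n : ℕ} (H K : Matrix (Fin n) (Fin n) ℝ)

noncomputable def wordSum (j : ℕ) : Matrix (Fin n) (Fin n) ℝ :=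
  ∑ w ∈ (finite_ofWeight j).toFinset, wordVal H K w

variable {K}

theorem wordVal_prependK (hK : ∀ i j, 0 ≤ K i j) (v : List (Bool × ℕ)) :
    wordVal H K (prependK v) = K * wordVal H K v := by
  have hKpow (m : ℕ) : aent (K ^ m) = K ^ m := aent_of_nonneg (Matrix.pow_apply_nonneg hK m)
  rcases v with _ | ⟨⟨_ | _, q⟩, v⟩ <;>
    simp only [prependK, wordVal_cons, wordVal_nil, Bool.false_eq_true, if_false, hKpow]
  · simp
  · rw [pow_succ', Matrix.mul_assoc]
  · rw [pow_one]

theorem wordVal_prependH (a : ℕ) (v : List (Bool × ℕ)) :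
    wordVal H K (prependH a v) = aent (H ^ a) * wordVal H K v := by
  by_cases ha : a = 0 <;> simp [prependH, ha, wordVal_cons, aent_one]

theorem sum_wordVal_prependH_prependK (j : ℕ) :
    ∑ x ∈ (Finset.range (j + 1)).sigma fun k => (finite_ofWeight k).toFinset,
        wordVal H K (prependH (j - x.1) (prependK x.2)) =
      ∑ w ∈ (finite_ofWeight (j + 1)).toFinset.erase [(true, j + 1)], wordVal H K w := by
  refine Finset.sum_nbij (fun x => prependH (j - x.1) (prependK x.2)) ?_ ?_ ?_ (fun _ _ => rfl)
  · rintro ⟨k, v⟩ hx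
    simp only [Finset.mem_sigma, Finset.mem_range, Set.Finite.mem_toFinset] at hx
    refine Finset.mem_erase.2 ⟨prependH_prependK_ne_singleton _ _ _, ?_⟩
    have hmem := prependH_prependK_mem_ofWeight (j - k) hx.2
    rwa [show j - k + (k + 1) = j + 1 by omega, ← Set.Finite.mem_toFinset] at hmem
  · rintro ⟨k, v⟩ hx ⟨k', v'⟩ hx' h
    simp only [Finset.coe_sigma, Set.mem_sigma_iff, Finset.coe_range, Set.mem_Iio,
      Finset.mem_coe, Set.Finite.mem_toFinset] at hx hx'
    obtain ⟨hk, rfl⟩ := (prependH_prependK_inj hx.2.1 hx'.2.1).1 h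
    dsimp only at hk
    obtain rfl : k = k' := by omega
    rfl
  · intro w hw
    simp only [Finset.coe_erase, Set.mem_sdiff, Finset.mem_coe, Set.Finite.mem_toFinset,
      Set.mem_singleton_iff] at hw
    obtain ⟨a, k, hak, v, hv, rfl⟩ := exists_eq_prependH_prependK hw.1 hw.2
    refine ⟨⟨k, v⟩, by simpa using ⟨by omega, hv⟩, ?_⟩
    simp only [show j - k = a by omega]

theorem wordSum_eq (hK : ∀ i j, 0 ≤ K i j) (j : ℕ) :
    wordSum H K j =
      aent (H ^ j) + ∑ k ∈ Finset.range j, aent (H ^ (j - 1 - k)) * (K * wordSum H K k) := by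
  rcases j with _ | j
  · have h0 : (finite_ofWeight 0).toFinset = {[]} := by simp [ofWeight_zero]
    simp [wordSum, h0, wordVal_nil, aent_one]
  · have hH : [(true, j + 1)] ∈ (finite_ofWeight (j + 1)).toFinset :=
      (Set.Finite.mem_toFinset _).2
        ((cons_mem_ofWeight_iff (k := 0)).2 ⟨by omega, by simp, by simp [ofWeight_zero]⟩)
    simp only [Nat.add_sub_cancel]
    rw [wordSum, ← Finset.add_sum_erase _ _ hH, ← sum_wordVal_prependH_prependK, Finset.sum_sigma]
    simp only [wordVal_prependH, wordVal_prependK H hK, wordSum, Finset.mul_sum, wordVal_cons,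
      wordVal_nil, ↓reduceIte, Matrix.mul_one]

theorem apply_succ_eq_mul_wordSum_mul {q : ℕ} (hK : ∀ i j, 0 ≤ K i j)
    {ΔS : Matrix (Fin n) (Fin q) ℝ} {F : ℕ → Matrix (Fin n) (Fin q) ℝ} (hF0 : F 0 = ΔS)
    (hF : ∀ j, F (j + 1) = K * ∑ i ∈ Finset.range (j + 1), aent (H ^ (j - i)) * F i) (j : ℕ) :
    F (j + 1) = K * wordSum H K j * ΔS := by
  induction j using Nat.strong_induction_on with
  | _ j ih =>
  have hterm : ∀ k ∈ Finset.range j, aent (H ^ (j - (k + 1))) * F (k + 1) =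
      aent (H ^ (j - 1 - k)) * (K * wordSum H K k) * ΔS := fun k hk => by
    rw [ih k (Finset.mem_range.1 hk), Nat.sub_add_eq, Nat.sub_right_comm, ← Matrix.mul_assoc]
  calc F (j + 1)
      = K * (∑ k ∈ Finset.range j, aent (H ^ (j - (k + 1))) * F (k + 1) +
          aent (H ^ (j - 0)) * F 0) := by rw [hF, Finset.sum_range_succ']
    _ = K * ((aent (H ^ j) +
          ∑ k ∈ Finset.range j, aent (H ^ (j - 1 - k)) * (K * wordSum H K k)) * ΔS) := by
      rw [Finset.sum_congr rfl hterm, hF0, Nat.sub_zero, Matrix.add_mul, Matrix.sum_mul, add_comm]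
    _ = K * wordSum H K j * ΔS := by rw [← wordSum_eq H hK, Matrix.mul_assoc]

end AlternatingWord

theorem stmt18_general {n q : ℕ} (Hhat ΔK : Matrix (Fin n) (Fin n) ℝ)
    (ΔS : Matrix (Fin n) (Fin q) ℝ)
    (hΔK : ∀ i j, 0 ≤ ΔK i j)
    (F : ℕ → Matrix (Fin n) (Fin q) ℝ)
    (hF0 : F 0 = ΔS)
    (hF : ∀ j, F (j + 1) = ΔK * ∑ i ∈ Finset.range (j + 1), aent (Hhat ^ (j - i)) * F i) :
    ∀ j, 1 ≤ j →
      F j = ΔK * (∑ᶠ w ∈ {w : List (Bool × ℕ) | (∀ a ∈ w, 1 ≤ a.2) ∧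
          w.Chain' (fun a b => a.1 ≠ b.1) ∧ (w.map Prod.snd).sum = j - 1},
        wordVal Hhat ΔK w) * ΔS := by
  rintro j hj
  obtain ⟨j, rfl⟩ := Nat.exists_eq_add_of_le' hj
  rw [AlternatingWord.apply_succ_eq_mul_wordSum_mul Hhat hΔK hF0 hF, AlternatingWord.wordSum,
    ← finsum_mem_eq_finite_toFinset_sum]
  rfl

/-- F_j = Δ_K Σ_{j−1} Δ_S, where Σ_{j−1} is the sum over all alternating words
|M₁^{q₁}|⋯|M_h^{q_h}| with Mᵢ ∈ {Ĥ, Δ_K}, Mᵢ ≠ M_{i+1}, qᵢ ≥ 1, Σqᵢ = j−1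
(with the convention Σ₀ = I, the empty word). -/
theorem stmt18 {n q : ℕ} (Hhat ΔK : Matrix (Fin n) (Fin n) ℝ)
    (ΔS : Matrix (Fin n) (Fin q) ℝ)
    (hΔK : ∀ i j, 0 ≤ ΔK i j) (hΔS : ∀ i j, 0 ≤ ΔS i j)
    (F : ℕ → Matrix (Fin n) (Fin q) ℝ)
    (hF0 : F 0 = ΔS)
    (hF : ∀ j, F (j + 1) = ΔK * ∑ i ∈ Finset.range (j + 1), aent (Hhat ^ (j - i)) * F i) :
    ∀ j, 1 ≤ j →
      F j = ΔK * (∑ᶠ w ∈ {w : List (Bool × ℕ) | (∀ a ∈ w, 1 ≤ a.2) ∧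
          w.Chain' (fun a b => a.1 ≠ b.1) ∧ (w.map Prod.snd).sum = j - 1},
        wordVal Hhat ΔK w) * ΔS :=
  stmt18_general Hhat ΔK ΔS hΔK F hF0 hF
end
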